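/- arXiv:math/0010155 — 2 statements merged into one kernel-verified Lean document; each statement's English description precedes it below -/
import Mathlib

section
/- Let X be a complex Banach space and (U_k)_{k=1}^∞ ⊆ L(X) a sequence of bounded operators such that sup_n max_{ε_k=±1} ‖Σ_{k=1}^n ε_k U_k‖ ≤ M < ∞. Then the family {U_k : k ∈ ℕ} is R-bounded with constant M. -/
open MeasureTheory Complex Set Filter

noncomputable section

/-- The sign `±1` attached to a Boolean. -/
def bsign (b : Bool) : ℝ := if b then 1 else -1

section RadDefs

variable {Y : Type*} [NormedAddCommGroup Y] [NormedSpace ℂ Y]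

/-- `E ‖∑ εₖ xₖ‖²`, the average over all `2^n` choices of signs. -/
def radAvg {n : ℕ} (x : Fin n → Y) : ℝ :=
  (∑ ε : Fin n → Bool, ‖∑ k, bsign (ε k) • x k‖ ^ 2) / (2 ^ n : ℝ)

/-- `max_{εₖ = ±1} ‖∑ εₖ xₖ‖`. -/
def signSup {n : ℕ} (x : Fin n → Y) : ℝ :=
  ⨆ ε : Fin n → Bool, ‖∑ k, bsign (ε k) • x k‖

/-- `E ‖∑_{j,k} ε_j η_k x_{jk}‖²`, average over two independent families of signs. -/
def radAvg2 {n : ℕ} (x : Fin n → Fin n → Y) : ℝ :=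
  (∑ ε : Fin n → Bool, ∑ η : Fin n → Bool,
    ‖∑ j, ∑ k, (bsign (ε j) * bsign (η k)) • x j k‖ ^ 2) / ((2 ^ n : ℝ) * (2 ^ n : ℝ))

end RadDefs

section Bounded

variable {X : Type*} [NormedAddCommGroup X] [NormedSpace ℂ X]

/-- Rademacher boundedness with constant `C`. -/
def RBoundedWith (C : ℝ) (𝒯 : Set (X →L[ℂ] X)) : Prop :=
  ∀ (n : ℕ) (T : Fin n → X →L[ℂ] X), (∀ k, T k ∈ 𝒯) → ∀ x : Fin n → X,
    Real.sqrt (radAvg fun k => T k (x k)) ≤ C * Real.sqrt (radAvg x)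

/-- Weak Rademacher boundedness with constant `C`. -/
def WRBoundedWith (C : ℝ) (𝒯 : Set (X →L[ℂ] X)) : Prop :=
  ∀ (n : ℕ) (T : Fin n → X →L[ℂ] X), (∀ k, T k ∈ 𝒯) →
    ∀ (x : Fin n → X) (xs : Fin n → X →L[ℂ] ℂ),
      ∑ k, ‖xs k (T k (x k))‖ ≤ C * Real.sqrt (radAvg x) * Real.sqrt (radAvg xs)

/-- Unconditional boundedness with constant `C`. -/
def UBoundedWith (C : ℝ) (𝒯 : Set (X →L[ℂ] X)) : Prop :=
  ∀ (n : ℕ) (T : Fin n → X →L[ℂ] X), (∀ k, T k ∈ 𝒯) →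
    ∀ (x : Fin n → X) (xs : Fin n → X →L[ℂ] ℂ),
      ∑ k, ‖xs k (T k (x k))‖ ≤ C * signSup x * signSup xs

end Bounded

/-- Pisier's property (α) with constant `C`. -/
def PropAlphaWith (C : ℝ) (X : Type*) [NormedAddCommGroup X] [NormedSpace ℂ X] : Prop :=
  ∀ (n : ℕ) (x : Fin n → Fin n → X) (α : Fin n → Fin n → ℂ), (∀ j k, ‖α j k‖ ≤ 1) →
    Real.sqrt (radAvg2 fun j k => α j k • x j k) ≤ C * Real.sqrt (radAvg2 x)

/-- Property (A) with constant `C`. -/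
def PropAWith (C : ℝ) (X : Type*) [NormedAddCommGroup X] [NormedSpace ℂ X] : Prop :=
  ∀ (n : ℕ) (x : Fin n → Fin n → X) (xs : Fin n → Fin n → X →L[ℂ] ℂ),
    ∑ j, ∑ k, ‖xs j k (x j k)‖ ≤ C * Real.sqrt (radAvg2 x) * Real.sqrt (radAvg2 xs)

/-- Property (Δ) with constant `C`. -/
def PropDeltaWith (C : ℝ) (X : Type*) [NormedAddCommGroup X] [NormedSpace ℂ X] : Prop :=
  ∀ (n : ℕ) (x : Fin n → Fin n → X),
    Real.sqrt (radAvg2 fun j k => if (k : ℕ) ≤ (j : ℕ) then x j k else 0)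
      ≤ C * Real.sqrt (radAvg2 x)



section Aux

lemma bsign_mul_bsign (a b : Bool) : bsign a * bsign b = bsign (a == b) := by
  cases a <;> cases b <;> simp [bsign]

lemma bsign_not' (b : Bool) : bsign (!b) = -bsign b := by cases b <;> simp [bsign]

lemma beq_beq (a c : Bool) : ((a == c) == c) = a := by cases a <;> cases c <;> rfl

lemma sum_bsign_mul {N : ℕ} (i j : Fin N) :
    ∑ δ : Fin N → Bool, bsign (δ i) * bsign (δ j)
      = if i = j then (2 ^ N : ℝ) else 0 := by
  split_ifs with h
  · subst h
    have : ∀ δ : Fin N → Bool, bsign (δ i) * bsign (δ i) = 1 := by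
      intro δ; cases δ i <;> simp [bsign]
    simp [this, Finset.card_univ]
  · have hinv : Function.Involutive
        (fun δ : Fin N → Bool => Function.update δ i (!(δ i))) := by
      intro δ
      ext t
      by_cases ht : t = i
      · subst ht; simp
      · simp [Function.update_of_ne ht]
    have := Fintype.sum_bijective _ hinv.bijective
      (fun δ : Fin N → Bool => bsign (δ i) * bsign (δ j))
      (fun δ => -(bsign (δ i) * bsign (δ j))) ?_
    · rw [Finset.sum_neg_distrib] at this
      linarith
    · intro δ
      simp only [Function.update_self, Function.update_of_ne (Ne.symm h), bsign_not']
      ring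

variable {X : Type*} [NormedAddCommGroup X] [NormedSpace ℂ X]

lemma reindex_sum {n : ℕ} (d : Fin n → Bool) (x : Fin n → X) :
    ∑ ε : Fin n → Bool, ‖∑ k, (bsign (ε k) * bsign (d k)) • x k‖ ^ 2
      = ∑ ε : Fin n → Bool, ‖∑ k, bsign (ε k) • x k‖ ^ 2 := by
  have hinv : Function.Involutive (fun ε : Fin n → Bool => fun k => ε k == d k) := by
    intro ε; funext k; exact beq_beq _ _
  refine (Fintype.sum_bijective _ hinv.bijective _ _ fun ε => ?_).symm
  congr 2
  refine Finset.sum_congr rfl fun k _ => ?_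
  rw [bsign_mul_bsign, beq_beq]

lemma key_identity (U : ℕ → X →L[ℂ] X) {n N : ℕ} (m : Fin n → Fin N)
    (c : Fin n → Bool) (x : Fin n → X) :
    (2 ^ N : ℝ) • ∑ k, bsign (c k) • U (m k) (x k)
      = ∑ δ : Fin N → Bool, (∑ j : Fin N, bsign (δ j) • U (j : ℕ))
          (∑ k, (bsign (c k) * bsign (δ (m k))) • x k) := by
  have step1 : ∀ δ : Fin N → Bool,
      (∑ j : Fin N, bsign (δ j) • U (j : ℕ)) (∑ k, (bsign (c k) * bsign (δ (m k))) • x k)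
        = ∑ j : Fin N, ∑ k, (bsign (δ j) * bsign (δ (m k)) * bsign (c k)) • U (j : ℕ) (x k) := by
    intro δ
    rw [ContinuousLinearMap.sum_apply]
    refine Finset.sum_congr rfl fun j _ => ?_
    rw [ContinuousLinearMap.smul_apply, map_sum, Finset.smul_sum]
    refine Finset.sum_congr rfl fun k _ => ?_
    rw [(U (j : ℕ)).map_smul_of_tower, smul_smul]
    ring_nf
  calc (2 ^ N : ℝ) • ∑ k, bsign (c k) • U (m k) (x k)
      = ∑ k, ∑ j : Fin N, ((if j = m k then (2 ^ N : ℝ) else 0) * bsign (c k)) • U (j : ℕ) (x k) := by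
        rw [Finset.smul_sum]
        refine Finset.sum_congr rfl fun k _ => ?_
        simp only [ite_mul, zero_mul, ite_smul, zero_smul,
          Finset.sum_ite_eq' Finset.univ, Finset.mem_univ, if_true]
        rw [smul_smul]
    _ = ∑ k, ∑ j : Fin N, ((∑ δ : Fin N → Bool, bsign (δ j) * bsign (δ (m k))) * bsign (c k)) • U (j : ℕ) (x k) := by
        refine Finset.sum_congr rfl fun k _ => Finset.sum_congr rfl fun j _ => ?_
        rw [sum_bsign_mul]
    _ = ∑ k, ∑ j : Fin N, ∑ δ : Fin N → Bool, (bsign (δ j) * bsign (δ (m k)) * bsign (c k)) • U (j : ℕ) (x k) := by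
        refine Finset.sum_congr rfl fun k _ => Finset.sum_congr rfl fun j _ => ?_
        rw [Finset.sum_mul, Finset.sum_smul]
    _ = ∑ δ : Fin N → Bool, ∑ j : Fin N, ∑ k, (bsign (δ j) * bsign (δ (m k)) * bsign (c k)) • U (j : ℕ) (x k) := by
        have h1 : (∑ k, ∑ j : Fin N, ∑ δ : Fin N → Bool,
            (bsign (δ j) * bsign (δ (m k)) * bsign (c k)) • U (j : ℕ) (x k))
            = ∑ k, ∑ δ : Fin N → Bool, ∑ j : Fin N,
            (bsign (δ j) * bsign (δ (m k)) * bsign (c k)) • U (j : ℕ) (x k) :=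
          Finset.sum_congr rfl fun k _ => Finset.sum_comm
        rw [h1, Finset.sum_comm]
        exact Finset.sum_congr rfl fun δ _ => Finset.sum_comm
    _ = ∑ δ : Fin N → Bool, (∑ j : Fin N, bsign (δ j) • U (j : ℕ))
          (∑ k, (bsign (c k) * bsign (δ (m k))) • x k) :=
        Finset.sum_congr rfl fun δ _ => (step1 δ).symm

end Aux

/-- If the partial sums `∑_{k<n} ε_k U_k` are uniformly bounded by `M`
over all choices of signs, then the family `{U_k : k ∈ ℕ}` is R-bounded with constant `M`. -/
theorem stmt_3 {X : Type*} [NormedAddCommGroup X] [NormedSpace ℂ X] [CompleteSpace X]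
    (U : ℕ → X →L[ℂ] X) (M : ℝ)
    (hU : ∀ (n : ℕ) (ε : ℕ → Bool), ‖∑ k ∈ Finset.range n, bsign (ε k) • U k‖ ≤ M) :
    RBoundedWith M {T | ∃ k : ℕ, T = U k} := by
  intro n T hT x
  simp only [Set.mem_setOf_eq] at hT
  choose m hm using hT
  set N : ℕ := (Finset.univ.sup m) + 1 with hN
  have hmN : ∀ k, m k < N := fun k =>
    Nat.lt_succ_of_le (Finset.le_sup (Finset.mem_univ k))
  set m' : Fin n → Fin N := fun k => ⟨m k, hmN k⟩ with hm'
  have hM0 : 0 ≤ M := by simpa using hU 0 (fun _ => true)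
  -- uniform bound on signed partial sums
  have hS : ∀ δ : Fin N → Bool, ‖∑ j : Fin N, bsign (δ j) • U (j : ℕ)‖ ≤ M := by
    intro δ
    set δ' : ℕ → Bool := fun t => if h : t < N then δ ⟨t, h⟩ else true with hδ'
    have h1 := hU N δ'
    rw [← Fin.sum_univ_eq_sum_range (fun t => bsign (δ' t) • U t) N] at h1
    have h2 : (∑ j : Fin N, bsign (δ' (j : ℕ)) • U (j : ℕ))
        = ∑ j : Fin N, bsign (δ j) • U (j : ℕ) := by
      refine Finset.sum_congr rfl fun j _ => ?_
      simp [hδ', j.isLt]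
    rwa [h2] at h1
  -- abbreviations
  set y : (Fin n → Bool) → (Fin N → Bool) → X :=
    fun ε δ => ∑ k, (bsign (ε k) * bsign (δ (m' k))) • x k with hy
  have hpow : (0:ℝ) < 2 ^ N := by positivity
  have hpown : (0:ℝ) < 2 ^ n := by positivity
  -- pointwise square bound
  have hsq : ∀ ε : Fin n → Bool,
      ‖∑ k, bsign (ε k) • T k (x k)‖ ^ 2
        ≤ M ^ 2 * ((∑ δ : Fin N → Bool, ‖y ε δ‖ ^ 2) / 2 ^ N) := by
    intro ε
    have hTx : (fun k => bsign (ε k) • T k (x k)) = fun k => bsign (ε k) • U (m' k) (x k) := by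
      funext k; rw [hm k]
    have key := key_identity U m' ε x
    have hnorm : (2 ^ N : ℝ) * ‖∑ k, bsign (ε k) • T k (x k)‖
        ≤ M * ∑ δ : Fin N → Bool, ‖y ε δ‖ := by
      calc (2 ^ N : ℝ) * ‖∑ k, bsign (ε k) • T k (x k)‖
          = ‖(2 ^ N : ℝ) • ∑ k, bsign (ε k) • U (m' k) (x k)‖ := by
            rw [norm_smul]
            simp only [hTx]
            congr 1
            simp [abs_of_pos hpow]
        _ = ‖∑ δ : Fin N → Bool, (∑ j : Fin N, bsign (δ j) • U (j : ℕ)) (y ε δ)‖ := by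
            rw [key]
        _ ≤ ∑ δ : Fin N → Bool, ‖(∑ j : Fin N, bsign (δ j) • U (j : ℕ)) (y ε δ)‖ :=
            norm_sum_le _ _
        _ ≤ ∑ δ : Fin N → Bool, M * ‖y ε δ‖ := by
            refine Finset.sum_le_sum fun δ _ => ?_
            exact ((∑ j : Fin N, bsign (δ j) • U (j : ℕ)).le_opNorm _).trans
              (mul_le_mul_of_nonneg_right (hS δ) (norm_nonneg _))
        _ = M * ∑ δ : Fin N → Bool, ‖y ε δ‖ := by rw [Finset.mul_sum]
    have hA : ‖∑ k, bsign (ε k) • T k (x k)‖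
        ≤ M * (∑ δ : Fin N → Bool, ‖y ε δ‖) / 2 ^ N := by
      rw [le_div_iff₀ hpow]
      linarith [hnorm]
    have hCS : (∑ δ : Fin N → Bool, ‖y ε δ‖) ^ 2
        ≤ 2 ^ N * ∑ δ : Fin N → Bool, ‖y ε δ‖ ^ 2 := by
      have := sq_sum_le_card_mul_sum_sq
        (s := (Finset.univ : Finset (Fin N → Bool))) (f := fun δ => ‖y ε δ‖)
      simpa [Finset.card_univ] using this
    have h0 : 0 ≤ ‖∑ k, bsign (ε k) • T k (x k)‖ := norm_nonneg _
    have hrhs0 : 0 ≤ M * (∑ δ : Fin N → Bool, ‖y ε δ‖) / 2 ^ N :=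
      le_trans h0 hA
    calc ‖∑ k, bsign (ε k) • T k (x k)‖ ^ 2
        ≤ (M * (∑ δ : Fin N → Bool, ‖y ε δ‖) / 2 ^ N) ^ 2 := by
          exact pow_le_pow_left₀ h0 hA 2
      _ = M ^ 2 * ((∑ δ : Fin N → Bool, ‖y ε δ‖) ^ 2) / (2 ^ N * 2 ^ N) := by
          field_simp
      _ ≤ M ^ 2 * (2 ^ N * ∑ δ : Fin N → Bool, ‖y ε δ‖ ^ 2) / (2 ^ N * 2 ^ N) := by
          apply div_le_div_of_nonneg_right ?_ (by positivity)
          exact mul_le_mul_of_nonneg_left hCS (sq_nonneg M)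
      _ = M ^ 2 * ((∑ δ : Fin N → Bool, ‖y ε δ‖ ^ 2) / 2 ^ N) := by
          field_simp
  -- summed bound
  have hfinal : radAvg (fun k => T k (x k)) ≤ M ^ 2 * radAvg x := by
    unfold radAvg
    rw [div_le_iff₀ hpown]
    have h1 : (∑ ε : Fin n → Bool, ‖∑ k, bsign (ε k) • T k (x k)‖ ^ 2)
        ≤ ∑ ε : Fin n → Bool, M ^ 2 * ((∑ δ : Fin N → Bool, ‖y ε δ‖ ^ 2) / 2 ^ N) :=
      Finset.sum_le_sum fun ε _ => hsq ε
    have h2 : (∑ ε : Fin n → Bool, M ^ 2 * ((∑ δ : Fin N → Bool, ‖y ε δ‖ ^ 2) / 2 ^ N))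
        = M ^ 2 / 2 ^ N * ∑ δ : Fin N → Bool, ∑ ε : Fin n → Bool, ‖y ε δ‖ ^ 2 := by
      rw [Finset.sum_comm, Finset.mul_sum]
      exact Finset.sum_congr rfl fun ε _ => by ring
    have h3 : ∀ δ : Fin N → Bool, (∑ ε : Fin n → Bool, ‖y ε δ‖ ^ 2)
        = ∑ ε : Fin n → Bool, ‖∑ k, bsign (ε k) • x k‖ ^ 2 := fun δ =>
      reindex_sum (fun k => δ (m' k)) x
    have h4 : (∑ δ : Fin N → Bool, ∑ ε : Fin n → Bool, ‖y ε δ‖ ^ 2)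
        = 2 ^ N * ∑ ε : Fin n → Bool, ‖∑ k, bsign (ε k) • x k‖ ^ 2 := by
      rw [Finset.sum_congr rfl fun δ _ => h3 δ, Finset.sum_const, Finset.card_univ]
      simp [mul_comm]
    calc (∑ ε : Fin n → Bool, ‖∑ k, bsign (ε k) • T k (x k)‖ ^ 2)
        ≤ M ^ 2 / 2 ^ N * (2 ^ N * ∑ ε : Fin n → Bool, ‖∑ k, bsign (ε k) • x k‖ ^ 2) := by
          rw [← h4, ← h2]; exact h1
      _ = M ^ 2 * ∑ ε : Fin n → Bool, ‖∑ k, bsign (ε k) • x k‖ ^ 2 := by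
          field_simp
      _ = M ^ 2 * ((∑ ε : Fin n → Bool, ‖∑ k, bsign (ε k) • x k‖ ^ 2) / 2 ^ n) * 2 ^ n := by
          field_simp
  have hx0 : 0 ≤ radAvg x := by
    unfold radAvg
    positivity
  calc Real.sqrt (radAvg fun k => T k (x k))
      ≤ Real.sqrt (M ^ 2 * radAvg x) := Real.sqrt_le_sqrt hfinal
    _ = M * Real.sqrt (radAvg x) := by
        rw [Real.sqrt_mul (sq_nonneg M), Real.sqrt_sq hM0]


end
end

section
/- Let X be a complex Banach space with property (A). Let (U_k)_{k=1}^∞ and (V_k)_{k=1}^∞ be sequences in L(X) with sup_n max_{ε_k=±1} ‖Σ_{k=1}^n ε_k U_k‖ ≤ M and sup_n max_{ε_k=±1} ‖Σ_{k=1}^n ε_k V_k‖ ≤ M, such that every U_j commutes with every V_k. Then there is a constant C, depending only on the property (A) constant of X, such that the family { Σ_{k=1}^n α_k U_k V_k : n ∈ ℕ, |α_k| ≤ 1 } is WR-bounded with constant C·M². -/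
/-!
Pair each functional with an operator from the left family and each vector with one from the
right: `|⟨T x, x*⟩| ≤ ∑_j |⟨V_j x, x* ∘ U_j⟩|` for `T = ∑ α_j U_j V_j`, so property (A) applied
to the square array `x_{jk} = V_j x_k`, `x*_{jk} = x*_k ∘ U_j` bounds the WR-sum. The double sign
sums of these arrays factor as `(∑ ε_j V_j)(∑ η_k x_k)` and `(∑ η_k x*_k) ∘ (∑ ε_j U_j)`, whence
the factor `M` for each of them.
-/

open MeasureTheory Complex Set Filter

noncomputable section

lemma PropAWith.mono {C C' : ℝ} {X : Type*} [NormedAddCommGroup X] [NormedSpace ℂ X]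
    (h : PropAWith C X) (hC : C ≤ C') : PropAWith C' X :=
  fun n x xs => (h n x xs).trans (by gcongr)

lemma sum_comp_castAdd_eq {n d : ℕ} (g : (Fin n → Bool) → ℝ) :
    ∑ ε : Fin (n + d) → Bool, g (fun k => ε (Fin.castAdd d k)) =
      2 ^ d * ∑ δ : Fin n → Bool, g δ := by
  rw [← (Fin.appendEquiv n d).sum_comp, Fintype.sum_prod_type]
  simp [Finset.mul_sum, mul_comm]

section Rademacher

variable {E F G : Type*} [NormedAddCommGroup E] [NormedSpace ℂ E]
  [NormedAddCommGroup F] [NormedSpace ℂ F] [NormedAddCommGroup G] [NormedSpace ℂ G]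

lemma radAvg_append_zero {n d : ℕ} (x : Fin n → E) :
    radAvg (Fin.append x (0 : Fin d → E)) = radAvg x := by
  have hsum : ∀ ε : Fin (n + d) → Bool, ∑ k, bsign (ε k) • Fin.append x (0 : Fin d → E) k =
      ∑ k, bsign (ε (Fin.castAdd d k)) • x k := by
    intro ε
    simp [Fin.sum_univ_add]
  simp only [radAvg, hsum, sum_comp_castAdd_eq (fun δ => ‖∑ k, bsign (δ k) • x k‖ ^ 2)]
  rw [pow_add]
  field_simp

lemma radAvg2_le_mul_radAvg {n : ℕ} (x : Fin n → Fin n → E) (y : Fin n → F) (c : ℝ)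
    (h : ∀ ε η : Fin n → Bool, ‖∑ j, ∑ k, (bsign (ε j) * bsign (η k)) • x j k‖ ^ 2 ≤
      c * ‖∑ k, bsign (η k) • y k‖ ^ 2) :
    radAvg2 x ≤ c * radAvg y := by
  calc radAvg2 x
      ≤ (∑ _ε : Fin n → Bool, ∑ η : Fin n → Bool, c * ‖∑ k, bsign (η k) • y k‖ ^ 2) /
          (2 ^ n * 2 ^ n) := by
        unfold radAvg2
        gcongr with ε _ η _
        exact h ε η
    _ = c * radAvg y := by
        simp only [radAvg, ← Finset.mul_sum, Finset.sum_const, Finset.card_univ,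
          Fintype.card_pi, Fintype.card_bool, Finset.prod_const, Fintype.card_fin, nsmul_eq_mul,
          Nat.cast_pow, Nat.cast_ofNat]
        field_simp

lemma sqrt_radAvg2_bilinear_le {n : ℕ} (B : E →L[ℂ] F →L[ℂ] G) (hB : ‖B‖ ≤ 1)
    (a : Fin n → E) (b : Fin n → F) {M : ℝ} (hM : 0 ≤ M)
    (ha : ∀ ε : Fin n → Bool, ‖∑ j, bsign (ε j) • a j‖ ≤ M) :
    √(radAvg2 fun j k => B (a j) (b k)) ≤ M * √(radAvg b) := by
  have hfactor : ∀ ε η : Fin n → Bool,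
      ∑ j, ∑ k, (bsign (ε j) * bsign (η k)) • B (a j) (b k) =
        B (∑ j, bsign (ε j) • a j) (∑ k, bsign (η k) • b k) := by
    intro ε η
    simp only [mul_smul, map_sum, ContinuousLinearMap.map_smul_of_tower, sum_apply, smul_apply]
    exact Finset.sum_comm
  have hle : radAvg2 (fun j k => B (a j) (b k)) ≤ M ^ 2 * radAvg b := by
    refine radAvg2_le_mul_radAvg _ _ _ fun ε η => ?_
    rw [hfactor, ← mul_pow]
    gcongr
    calc ‖B (∑ j, bsign (ε j) • a j) (∑ k, bsign (η k) • b k)‖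
        ≤ ‖B‖ * ‖∑ j, bsign (ε j) • a j‖ * ‖∑ k, bsign (η k) • b k‖ := B.le_opNorm₂ _ _
      _ ≤ 1 * M * ‖∑ k, bsign (η k) • b k‖ := by gcongr; exact ha ε
      _ = M * ‖∑ k, bsign (η k) • b k‖ := by ring
  calc √(radAvg2 fun j k => B (a j) (b k)) ≤ √(M ^ 2 * radAvg b) := Real.sqrt_le_sqrt hle
    _ = M * √(radAvg b) := by rw [Real.sqrt_mul (sq_nonneg M), Real.sqrt_sq hM]

lemma norm_sum_fin_sign_smul_le {M : ℝ} {U : ℕ → E}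
    (hU : ∀ (n : ℕ) (ε : ℕ → Bool), ‖∑ k ∈ Finset.range n, bsign (ε k) • U k‖ ≤ M)
    (m : ℕ) (ε : Fin m → Bool) : ‖∑ j : Fin m, bsign (ε j) • U j‖ ≤ M := by
  have h := hU m fun i => if h : i < m then ε ⟨i, h⟩ else true
  rw [← Fin.sum_univ_eq_sum_range
    (fun i => bsign (if h : i < m then ε ⟨i, h⟩ else true) • U i)] at h
  simpa using h

lemma norm_apply_sum_smul_comp_le {N m : ℕ} (hNm : N ≤ m) (U : ℕ → F →L[ℂ] G)
    (V : ℕ → E →L[ℂ] F) {α : ℕ → ℂ} (hα : ∀ k, ‖α k‖ ≤ 1) (f : G →L[ℂ] ℂ) (x : E) :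
    ‖f ((∑ i ∈ Finset.range N, α i • (U i ∘L V i)) x)‖ ≤ ∑ j : Fin m, ‖f (U j (V j x))‖ := by
  rw [Fin.sum_univ_eq_sum_range (fun i => ‖f (U i (V i x))‖)]
  calc ‖f ((∑ i ∈ Finset.range N, α i • (U i ∘L V i)) x)‖
      = ‖∑ i ∈ Finset.range N, α i • f (U i (V i x))‖ := by simp
    _ ≤ ∑ i ∈ Finset.range N, ‖f (U i (V i x))‖ := by
        refine (norm_sum_le _ _).trans (Finset.sum_le_sum fun i _ => ?_)
        rw [norm_smul]
        exact mul_le_of_le_one_left (norm_nonneg _) (hα i)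
    _ ≤ ∑ i ∈ Finset.range m, ‖f (U i (V i x))‖ :=
        Finset.sum_le_sum_of_subset_of_nonneg (Finset.range_subset_range.mpr hNm)
          fun _ _ _ => norm_nonneg _

end Rademacher

theorem PropAWith.wrBoundedWith_sum_smul_comp {C M : ℝ} {X : Type*} [NormedAddCommGroup X]
    [NormedSpace ℂ X] (hA : PropAWith C X) (hC : 0 ≤ C) {U V : ℕ → X →L[ℂ] X}
    (hU : ∀ (m : ℕ) (ε : Fin m → Bool), ‖∑ j : Fin m, bsign (ε j) • U j‖ ≤ M)
    (hV : ∀ (m : ℕ) (ε : Fin m → Bool), ‖∑ j : Fin m, bsign (ε j) • V j‖ ≤ M) :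
    WRBoundedWith (C * M ^ 2)
      {W | ∃ (n : ℕ) (α : ℕ → ℂ),
        (∀ k, ‖α k‖ ≤ 1) ∧ W = ∑ k ∈ Finset.range n, α k • (U k ∘L V k)} := by
  intro n T hT x xs
  choose N α hα hT using hT
  have hM : 0 ≤ M := by simpa using hU 0 finZeroElim
  -- the indices `Fin (n + d)` cover the vectors and every `U_j V_j` occurring in some `T k`
  set d := Finset.univ.sup N
  set x' : Fin (n + d) → X := Fin.append x 0
  set xs' : Fin (n + d) → X →L[ℂ] ℂ := Fin.append xs 0
  have hsum : ∑ k, ‖xs k (T k (x k))‖ ≤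
      ∑ j : Fin (n + d), ∑ k, ‖xs' k (U j (V j (x' k)))‖ := by
    rw [Finset.sum_comm]
    calc ∑ k, ‖xs k (T k (x k))‖
        ≤ ∑ k, ∑ j : Fin (n + d), ‖xs k (U j (V j (x k)))‖ := by
          refine Finset.sum_le_sum fun k _ => ?_
          rw [hT k]
          exact norm_apply_sum_smul_comp_le
            ((Finset.le_sup (Finset.mem_univ k)).trans (Nat.le_add_left _ _)) U V (hα k) _ _
      _ = ∑ k, ∑ j : Fin (n + d), ‖xs' k (U j (V j (x' k)))‖ := by
          rw [Fin.sum_univ_add]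
          simp [x', xs']
  have hx : √(radAvg2 fun (j k : Fin (n + d)) => V j (x' k)) ≤ M * √(radAvg x) := by
    rw [← radAvg_append_zero x (d := d)]
    exact sqrt_radAvg2_bilinear_le (ContinuousLinearMap.id ℂ (X →L[ℂ] X))
      ContinuousLinearMap.norm_id_le (fun j : Fin (n + d) => V j) x' hM (hV _)
  have hxs : √(radAvg2 fun (j k : Fin (n + d)) => (xs' k).comp (U j)) ≤ M * √(radAvg xs) := by
    have hB : ‖(ContinuousLinearMap.compL ℂ X X ℂ).flip‖ ≤ 1 := by
      rw [ContinuousLinearMap.opNorm_flip]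
      exact ContinuousLinearMap.norm_compL_le _ _ _ _
    rw [← radAvg_append_zero xs (d := d)]
    exact sqrt_radAvg2_bilinear_le _ hB (fun j : Fin (n + d) => U j) xs' hM (hU _)
  calc ∑ k, ‖xs k (T k (x k))‖
      ≤ ∑ j : Fin (n + d), ∑ k, ‖(xs' k).comp (U j) (V j (x' k))‖ := hsum
    _ ≤ C * √(radAvg2 fun (j k : Fin (n + d)) => V j (x' k)) *
          √(radAvg2 fun (j k : Fin (n + d)) => (xs' k).comp (U j)) := hA _ _ _
    _ ≤ C * (M * √(radAvg x)) * (M * √(radAvg xs)) := by gcongr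
    _ = C * M ^ 2 * √(radAvg x) * √(radAvg xs) := by ring

/-- In a space with property (A) (with constant `CA`), if the sign-sums of
`(U_k)` and `(V_k)` are uniformly bounded by `M` and every `U_j` commutes with every `V_k`,
then `{∑_k α_k U_k V_k : |α_k| ≤ 1}` is WR-bounded with constant `C·M²`, where `C` depends
only on the property (A) constant. -/
theorem stmt_5 : ∀ CA : ℝ, ∃ C : ℝ,
    ∀ (X : Type) [NormedAddCommGroup X] [NormedSpace ℂ X] [CompleteSpace X],
    PropAWith CA X →
    ∀ (U V : ℕ → X →L[ℂ] X) (M : ℝ),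
      (∀ (n : ℕ) (ε : ℕ → Bool), ‖∑ k ∈ Finset.range n, bsign (ε k) • U k‖ ≤ M) →
      (∀ (n : ℕ) (ε : ℕ → Bool), ‖∑ k ∈ Finset.range n, bsign (ε k) • V k‖ ≤ M) →
      (∀ j k : ℕ, U j ∘L V k = V k ∘L U j) →
      WRBoundedWith (C * M ^ 2)
        {W | ∃ (n : ℕ) (α : ℕ → ℂ),
          (∀ k, ‖α k‖ ≤ 1) ∧ W = ∑ k ∈ Finset.range n, α k • (U k ∘L V k)} := by
  exact fun CA => ⟨|CA|, fun X _ _ _ hA U V M hU hV _ =>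
    (hA.mono (le_abs_self CA)).wrBoundedWith_sum_smul_comp (abs_nonneg CA)
      (norm_sum_fin_sign_smul_le hU) (norm_sum_fin_sign_smul_le hV)⟩

end
end
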